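/- Let t be an SL₂-tiling with associated functions p and q. If integers b, v satisfy t(b,v−1) < t(b,v) and t(b,v) > t(b,v+1) (a local maximum in the b-th row), then q(v−1,v+1) = 1. Symmetrically, if t(b−1,v) < t(b,v) and t(b,v) > t(b+1,v), then p(b−1,b+1) = 1. -/

import Mathlib

/-- An `SL₂`-tiling: all entries are `≥ 1` and every adjacent `2×2` minor is `1`. -/
def IsSL2Tiling (t : ℤ → ℤ → ℤ) : Prop :=
  (∀ i j, 1 ≤ t i j) ∧
  (∀ i j, t i j * t (i+1) (j+1) - t i (j+1) * t (i+1) j = 1)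

/-- The infinite frieze `p` associated to an `SL₂`-tiling. -/
def pFrieze (t : ℤ → ℤ → ℤ) (a d : ℤ) : ℤ := t a 0 * t d 1 - t a 1 * t d 0

/-- The infinite frieze `q` associated to an `SL₂`-tiling. -/
def qFrieze (t : ℤ → ℤ → ℤ) (u x : ℤ) : ℤ := t 0 u * t 1 x - t 0 x * t 1 u


/-!
Along columns, an `SL₂`-tiling satisfies the frieze recurrence
`t(i,v-1) + t(i,v+1) = q(v-1,v+1) · t(i,v)`: expanding the minor of rows `i, i+1` and columns
`v-1, v+1` against the two unimodular minors through column `v` gives this identity with the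
minor in place of `q`, and comparing the identities of rows `i` and `i+1` (after cancelling the
positive entry `t(i+1,v)`) shows the minor does not depend on `i`. At a local maximum of row `b`
the left side lies strictly between `t(b,v)` and `2·t(b,v)`, so `q(v-1,v+1) = 1`. The statement
for `p` is the statement for `q` applied to the transposed tiling.
-/

lemma eq_one_of_add_eq_mul_of_lt {a c b m : ℤ} (ha : 0 < a) (hc : 0 < c) (hab : a < b)
    (hcb : c < b) (h : a + c = m * b) : m = 1 := by
  have hb : 0 < b := ha.trans hab
  have hm_pos : 0 < m := pos_of_mul_pos_left (h ▸ add_pos ha hc) hb.le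
  have hm_lt : m < 2 := lt_of_mul_lt_mul_right (by linarith) hb.le
  omega

def rowMinor (t : ℤ → ℤ → ℤ) (i u x : ℤ) : ℤ := t i u * t (i + 1) x - t i x * t (i + 1) u

namespace IsSL2Tiling

variable {t : ℤ → ℤ → ℤ}

theorem transpose (ht : IsSL2Tiling t) : IsSL2Tiling fun i j => t j i :=
  ⟨fun i j => ht.1 j i, fun i j => by linear_combination ht.2 j i⟩

theorem add_eq_rowMinor_mul (ht : IsSL2Tiling t) (i v : ℤ) :
    t i (v - 1) + t i (v + 1) = rowMinor t i (v - 1) (v + 1) * t i v ∧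
      t (i + 1) (v - 1) + t (i + 1) (v + 1) = rowMinor t i (v - 1) (v + 1) * t (i + 1) v := by
  have hleft := ht.2 i (v - 1)
  have hright := ht.2 i v
  rw [sub_add_cancel] at hleft
  unfold rowMinor
  constructor
  · linear_combination -(t i (v - 1)) * hright - t i (v + 1) * hleft
  · linear_combination -(t (i + 1) (v + 1)) * hleft - t (i + 1) (v - 1) * hright

theorem rowMinor_succ (ht : IsSL2Tiling t) (i v : ℤ) :
    rowMinor t (i + 1) (v - 1) (v + 1) = rowMinor t i (v - 1) (v + 1) := by
  have hpos : t (i + 1) v ≠ 0 := (zero_lt_one.trans_le (ht.1 (i + 1) v)).ne'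
  refine mul_right_cancel₀ hpos ?_
  rw [← (ht.add_eq_rowMinor_mul (i + 1) v).1, (ht.add_eq_rowMinor_mul i v).2]

theorem rowMinor_eq_qFrieze (ht : IsSL2Tiling t) (i v : ℤ) :
    rowMinor t i (v - 1) (v + 1) = qFrieze t (v - 1) (v + 1) := by
  induction i using Int.induction_on with
  | zero => rfl
  | succ k ih => rw [ht.rowMinor_succ, ih]
  | pred k ih => rw [← ih, ← ht.rowMinor_succ, sub_add_cancel]

theorem add_eq_qFrieze_mul (ht : IsSL2Tiling t) (i v : ℤ) :
    t i (v - 1) + t i (v + 1) = qFrieze t (v - 1) (v + 1) * t i v := by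
  rw [← ht.rowMinor_eq_qFrieze i, (ht.add_eq_rowMinor_mul i v).1]

theorem qFrieze_eq_one_of_local_max (ht : IsSL2Tiling t) {b v : ℤ}
    (hprev : t b (v - 1) < t b v) (hnext : t b (v + 1) < t b v) :
    qFrieze t (v - 1) (v + 1) = 1 :=
  eq_one_of_add_eq_mul_of_lt (ht.1 b (v - 1)) (ht.1 b (v + 1)) hprev hnext
    (ht.add_eq_qFrieze_mul b v)

end IsSL2Tiling

theorem pFrieze_eq_qFrieze_transpose (t : ℤ → ℤ → ℤ) (a d : ℤ) :
    pFrieze t a d = qFrieze (fun i j => t j i) a d := by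
  unfold pFrieze qFrieze
  ring

theorem local_max_gives_one (t : ℤ → ℤ → ℤ) (ht : IsSL2Tiling t) :
    (∀ b v : ℤ, t b (v-1) < t b v → t b (v+1) < t b v →
      qFrieze t (v-1) (v+1) = 1) ∧
    (∀ b v : ℤ, t (b-1) v < t b v → t (b+1) v < t b v →
      pFrieze t (b-1) (b+1) = 1) :=
  ⟨fun _ _ => ht.qFrieze_eq_one_of_local_max, fun b v hprev hnext => by
    rw [pFrieze_eq_qFrieze_transpose]
    exact ht.transpose.qFrieze_eq_one_of_local_max (b := v) hprev hnext⟩
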